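/- For an affine space A (modelled on a vector space U) with a distinguished nonzero vector v ∈ U, the vector dual A† = Aff(A,ℝ) together with the constant function 1_A satisfies: the affine dual of A†, namely (A†)‡ = {φ ∈ (A†)* : φ(1_A) = 1}, is canonically isomorphic as an affine space to A via the evaluation map a ↦ (f ↦ f(a)). -/
import Mathlib


noncomputable section

/-- Evaluation of affine functions at a point, as a linear functional on
`A† = Aff(A,ℝ)`. -/
def evAff {U A : Type*} [AddCommGroup U] [Module ℝ U] [AddTorsor U A] (a : A) :
    (A →ᵃ[ℝ] ℝ) →ₗ[ℝ] ℝ where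
  toFun f := f a
  map_add' f g := by simp
  map_smul' c f := by simp

/-- Lift of a linear functional on `U` to an affine function on `A`, based at `a₀`. -/
def liftAff {U A : Type*} [AddCommGroup U] [Module ℝ U] [AddTorsor U A] (a₀ : A) :
    (U →ₗ[ℝ] ℝ) →ₗ[ℝ] (A →ᵃ[ℝ] ℝ) where
  toFun g :=
    { toFun := fun x => g (x -ᵥ a₀)
      linear := g
      map_vadd' := fun p v => by simp [vadd_vsub_assoc, add_comm] }
  map_add' g h := by ext x; simp
  map_smul' c g := by ext x; simp

@[simp] lemma liftAff_apply {U A : Type*} [AddCommGroup U] [Module ℝ U] [AddTorsor U A]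
    (a₀ : A) (g : U →ₗ[ℝ] ℝ) (x : A) : liftAff a₀ g x = g (x -ᵥ a₀) := rfl

@[simp] lemma liftAff_linear {U A : Type*} [AddCommGroup U] [Module ℝ U] [AddTorsor U A]
    (a₀ : A) (g : U →ₗ[ℝ] ℝ) : (liftAff a₀ g).linear = g := rfl

/-- "Take the linear part" as a linear map. -/
def linPart {U A : Type*} [AddCommGroup U] [Module ℝ U] [AddTorsor U A] (u : U) :
    (A →ᵃ[ℝ] ℝ) →ₗ[ℝ] ℝ where
  toFun f := f.linear u
  map_add' f g := rfl
  map_smul' c f := rfl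

lemma affine_decomp {U A : Type*} [AddCommGroup U] [Module ℝ U] [AddTorsor U A]
    (a₀ : A) (f : A →ᵃ[ℝ] ℝ) :
    f = liftAff a₀ f.linear + AffineMap.const ℝ A (f a₀) := by
  ext x
  have : f x = f ((x -ᵥ a₀) +ᵥ a₀) := by rw [vsub_vadd]
  rw [this, f.map_vadd]
  simp

/-- for a nonempty finite-dimensional affine space `A` (modelled on `U`),
the evaluation map `ev : A → (A†)*`, `ev(a)(f) = f(a)`, is an affine bijection from `A`
onto the affine dual `(A†)‡ = {φ : φ(1_A) = 1}` of the vector dual `A† = Aff(A,ℝ)`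
(whose distinguished element is the constant function `1_A`). -/
theorem affine_double_dual {U A : Type*} [AddCommGroup U] [Module ℝ U]
    [FiniteDimensional ℝ U] [AddTorsor U A] [Nonempty A] :
    Function.Injective (evAff (U := U) (A := A)) ∧
    Set.range (evAff (U := U) (A := A))
      = {φ : (A →ᵃ[ℝ] ℝ) →ₗ[ℝ] ℝ | φ (AffineMap.const ℝ A (1 : ℝ)) = 1} ∧
    ∃ L : U →ₗ[ℝ] ((A →ᵃ[ℝ] ℝ) →ₗ[ℝ] ℝ),
      ∀ (a : A) (u : U), evAff (U := U) (u +ᵥ a) = L u + evAff (U := U) a := by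
  obtain ⟨a₀⟩ := ‹Nonempty A›
  refine ⟨?_, ?_, ?_⟩
  · -- injectivity
    intro a b hab
    by_contra hne
    have hw : a -ᵥ b ≠ 0 := fun h => hne (by
      have := vsub_eq_zero_iff_eq.mp h; exact this)
    obtain ⟨φ, hφ⟩ : ∃ φ : U →ₗ[ℝ] ℝ, φ (a -ᵥ b) ≠ 0 := by
      by_contra h
      push_neg at h
      exact hw ((Module.forall_dual_apply_eq_zero_iff ℝ _).mp h)
    have := congrArg (fun ψ => ψ (liftAff b φ)) hab
    simp only [evAff, LinearMap.coe_mk, AddHom.coe_mk, liftAff_apply, vsub_self,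
      map_zero] at this
    exact hφ this
  · -- range
    ext φ
    constructor
    · rintro ⟨a, rfl⟩
      simp [evAff]
    · intro hφ
      simp only [Set.mem_setOf_eq] at hφ
      -- ψ := φ - evAff a₀ vanishes on constants
      set ψ : (A →ᵃ[ℝ] ℝ) →ₗ[ℝ] ℝ := φ - evAff a₀ with hψ
      have hψ1 : ψ (AffineMap.const ℝ A (1 : ℝ)) = 0 := by
        simp [hψ, evAff, hφ]
      -- χ : Dual U → ℝ
      set χ : Module.Dual ℝ U →ₗ[ℝ] ℝ := ψ.comp (liftAff a₀) with hχ
      obtain ⟨u, hu⟩ : ∃ u : U, ∀ g : Module.Dual ℝ U, χ g = g u := by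
        obtain ⟨u, hu⟩ := (Module.evalEquiv ℝ U).surjective χ
        exact ⟨u, fun g => by rw [← hu]; simp [Module.evalEquiv_apply]⟩
      refine ⟨u +ᵥ a₀, ?_⟩
      ext f
      have hdecomp := affine_decomp a₀ f
      have hconst : ∀ c : ℝ, ψ (AffineMap.const ℝ A c) = 0 := by
        intro c
        have : AffineMap.const ℝ A c = c • AffineMap.const ℝ A (1 : ℝ) := by
          ext x; simp
        rw [this, map_smul, hψ1, smul_zero]
      have hψf : ψ f = f.linear u := by
        conv_lhs => rw [hdecomp]
        rw [map_add, hconst]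
        have := hu f.linear
        simpa [hχ] using this
      have : φ f = ψ f + f a₀ := by simp [hψ, evAff]
      rw [this, hψf]
      simp [evAff, f.map_vadd]
  · -- linear part
    refine ⟨{ toFun := fun u => linPart u
              map_add' := fun u v => by ext f; simp [linPart]
              map_smul' := fun c u => by ext f; simp [linPart] }, ?_⟩
    intro a u
    ext f
    simp [evAff, linPart, f.map_vadd, add_comm]
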